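/- Let α, β ∈ ℂ and let 𝔻 be a two-mode displacement operator with parameters (−α/2, −β/2). Then for all B, C ∈ ℂ, 𝔻⁻¹(P_odd(𝔻(B • (coh α ⊠ coh 0) + C • (coh 0 ⊠ coh β)))) = ((B−C)/2) • (coh α ⊠ coh 0 − coh 0 ⊠ coh β). -/
import Mathlib


open scoped ComplexConjugate ENNReal

/-- The components of the coherent state `|α⟩`: `exp(−|α|²/2)·αⁿ/√(n!)`. -/
noncomputable def cohFun (α : ℂ) : ℕ → ℂ := fun n =>
  (Real.exp (-‖α‖ ^ 2 / 2) / Real.sqrt (Nat.factorial n) : ℝ) * α ^ n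

lemma cohFun_memℓp (α : ℂ) : Memℓp (cohFun α) 2 := by
  apply memℓp_gen
  have h : Summable (fun n : ℕ =>
      Real.exp (-‖α‖ ^ 2 / 2) ^ 2 * ((‖α‖ ^ 2) ^ n / (Nat.factorial n))) :=
    (Real.summable_pow_div_factorial (‖α‖ ^ 2)).mul_left _
  refine h.congr fun n => ?_
  have h2 : ((2 : ℝ≥0∞).toReal) = (2 : ℝ) := by norm_num
  rw [h2, Real.rpow_two]
  have hn : ‖cohFun α n‖ = Real.exp (-‖α‖ ^ 2 / 2) / Real.sqrt (Nat.factorial n) * ‖α‖ ^ n := by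
    simp only [cohFun, norm_mul, norm_pow, Complex.norm_real, Real.norm_eq_abs]
    rw [abs_of_pos (by positivity)]
  rw [hn, mul_pow, div_pow, Real.sq_sqrt (by positivity), pow_right_comm]
  ring

/-- The coherent state `|α⟩` as an element of `ℓ²(ℕ, ℂ)`. -/
noncomputable def coh (α : ℂ) : lp (fun _ : ℕ => ℂ) 2 := ⟨cohFun α, cohFun_memℓp α⟩

/-- The product state `ψ ⊠ χ` in the two-mode space `ℓ²(ℕ×ℕ, ℂ)`,
with components `(ψ ⊠ χ)(n, m) = ψ n · χ m`. -/
noncomputable def tmul (ψ χ : lp (fun _ : ℕ => ℂ) 2) : lp (fun _ : ℕ × ℕ => ℂ) 2 :=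
  ⟨fun q => ψ q.1 * χ q.2, by
    apply memℓp_gen
    have hψ := (lp.memℓp ψ).summable (p := 2) (by norm_num)
    have hχ := (lp.memℓp χ).summable (p := 2) (by norm_num)
    refine (hψ.mul_of_nonneg hχ (fun n => Real.rpow_nonneg (norm_nonneg _) _)
      (fun n => Real.rpow_nonneg (norm_nonneg _) _)).congr fun q => ?_
    rw [norm_mul, Real.mul_rpow (norm_nonneg _) (norm_nonneg _)]⟩

/-- A two-mode displacement operator with parameters `(γ, δ)`: a linear isometric
equivalence of `ℓ²(ℕ×ℕ, ℂ)` acting on product coherent states in the prescribed way. -/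
def IsTwoModeDisplacement
    (𝔻 : lp (fun _ : ℕ × ℕ => ℂ) 2 ≃ₗᵢ[ℂ] lp (fun _ : ℕ × ℕ => ℂ) 2) (γ δ : ℂ) : Prop :=
  ∀ β β' : ℂ, 𝔻 (tmul (coh β) (coh β')) =
    Complex.exp ((γ * conj β - conj γ * β) / 2 + (δ * conj β' - conj δ * β') / 2) •
      tmul (coh (γ + β)) (coh (δ + β'))


lemma cohFun_neg (a : ℂ) (n : ℕ) : cohFun (-a) n = (-1) ^ n * cohFun a n := by
  unfold cohFun
  rw [norm_neg, neg_pow]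
  ring

lemma coh_apply (a : ℂ) (n : ℕ) : (coh a) n = cohFun a n := rfl

lemma tmul_apply (ψ χ : lp (fun _ : ℕ => ℂ) 2) (q : ℕ × ℕ) :
    (tmul ψ χ) q = ψ q.1 * χ q.2 := rfl

/-- action of the displaced odd-parity projection on superpositions of
`coh α ⊠ coh 0` and `coh 0 ⊠ coh β`. -/
theorem displaced_odd_parity_action (α β : ℂ)
    (𝔻 : lp (fun _ : ℕ × ℕ => ℂ) 2 ≃ₗᵢ[ℂ] lp (fun _ : ℕ × ℕ => ℂ) 2)
    (h𝔻 : IsTwoModeDisplacement 𝔻 (-α / 2) (-β / 2))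
    (Pod : lp (fun _ : ℕ × ℕ => ℂ) 2 →L[ℂ] lp (fun _ : ℕ × ℕ => ℂ) 2)
    (hPod : ∀ (φ : lp (fun _ : ℕ × ℕ => ℂ) 2) (n m : ℕ),
      (Pod φ) (n, m) = if Odd (n + m) then φ (n, m) else 0)
    (B C : ℂ) :
    𝔻.symm (Pod (𝔻 (B • tmul (coh α) (coh 0) + C • tmul (coh 0) (coh β))))
      = ((B - C) / 2) • (tmul (coh α) (coh 0) - tmul (coh 0) (coh β)) := by
  have hu := h𝔻 α 0
  have hv := h𝔻 0 β
  have e1 : (((-α/2) * conj α - conj (-α/2) * α) / 2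
      + ((-β/2) * conj (0:ℂ) - conj (-β/2) * 0) / 2) = 0 := by
    simp only [map_neg, map_div₀, map_ofNat, map_zero, mul_zero, sub_zero]
    ring
  have e2 : (((-α/2) * conj (0:ℂ) - conj (-α/2) * 0) / 2
      + ((-β/2) * conj β - conj (-β/2) * β) / 2) = 0 := by
    simp only [map_neg, map_div₀, map_ofNat, map_zero, mul_zero, sub_zero]
    ring
  rw [e1, Complex.exp_zero, one_smul, show -α/2 + α = α/2 by ring,
    show -β/2 + 0 = -(β/2) by ring] at hu
  rw [e2, Complex.exp_zero, one_smul, show -α/2 + 0 = -(α/2) by ring,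
    show -β/2 + β = β/2 by ring] at hv
  have key : Pod (𝔻 (B • tmul (coh α) (coh 0) + C • tmul (coh 0) (coh β)))
      = 𝔻 (((B - C)/2) • (tmul (coh α) (coh 0) - tmul (coh 0) (coh β))) := by
    rw [map_add, map_smul, map_smul, map_smul, map_sub, hu, hv]
    ext q
    obtain ⟨n, m⟩ := q
    rw [hPod]
    simp only [lp.coeFn_add, lp.coeFn_smul, lp.coeFn_sub, Pi.add_apply, Pi.smul_apply,
      Pi.sub_apply, tmul_apply, coh_apply, smul_eq_mul, cohFun_neg]
    rcases Nat.even_or_odd (n + m) with he | ho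
    · rw [if_neg (by simpa using he)]
      have h1 : ((-1 : ℂ)) ^ n = (-1 : ℂ) ^ m := by
        have := (Even.neg_one_pow (α := ℂ) he)
        rw [pow_add] at this
        calc ((-1:ℂ))^n = ((-1:ℂ))^n * (((-1:ℂ))^m * ((-1:ℂ))^m) := by
              rw [← pow_add, ← two_mul, pow_mul]; norm_num
          _ = (-1:ℂ)^m := by rw [← mul_assoc, this, one_mul]
      rw [h1]; ring
    · rw [if_pos ho]
      have h1 : ((-1 : ℂ)) ^ n = -(-1 : ℂ) ^ m := by
        have := (Odd.neg_one_pow (α := ℂ) ho)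
        rw [pow_add] at this
        calc ((-1:ℂ))^n = ((-1:ℂ))^n * (((-1:ℂ))^m * ((-1:ℂ))^m) := by
              rw [← pow_add, ← two_mul, pow_mul]; norm_num
          _ = -(-1:ℂ)^m := by rw [← mul_assoc, this, neg_one_mul]
      rw [h1]; ring
  rw [key, LinearIsometryEquiv.symm_apply_apply]
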